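/- arXiv:1411.7435 — 7 statements merged into one kernel-verified Lean document; each statement's English description precedes it below -/
import Mathlib

section
/- Let W be a word of length x over an ordered alphabet, and let d ≥ 1. Then either the first ⌊x/d⌋ suffixes of W (the suffixes starting at positions 1,…,⌊x/d⌋) are pairwise comparable in the lexicographic order (neither is a prefix of the other), or W contains a subword of the form u^d for some nonempty word u. -/
/-!
If two of the first `⌊x/d⌋` suffixes `W[i..]` and `W[j..]`, `i < j`, are incomparable, then the
longer one `V = W[i..]` has the period `p = j - i`, since `V` shifted by `p` is a prefix of `V`.
Hence the first `d * p` letters of `V` are the `d`-th power of its first `p` letters, and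
`i + d * p ≤ d * j + d ≤ x` guarantees that these letters fit inside `W`.
-/

variable {α : Type*} [LinearOrder α]

/-- `u` repeated `d` times. -/
def wpow (u : List α) (d : ℕ) : List α := (List.replicate d u).flatten

/-- Two words are comparable if neither is a prefix of the other. -/
def WComparable (u v : List α) : Prop := ¬ u <+: v ∧ ¬ v <+: u

namespace WordPeriod

variable {α : Type*}

theorem wpow_succ (u : List α) (n : ℕ) : wpow u (n + 1) = u ++ wpow u n := by
  simp [wpow, List.replicate_succ]

theorem wComparable_comm [LinearOrder α] (u v : List α) : WComparable u v ↔ WComparable v u :=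
  And.comm

theorem take_mul_eq_wpow_take_of_drop_prefix {V : List α} {p : ℕ} (h : V.drop p <+: V)
    {n : ℕ} (hn : n * p ≤ V.length) : V.take (n * p) = wpow (V.take p) n := by
  induction n with
  | zero => simp [wpow]
  | succ n ih =>
    rw [Nat.add_one_mul] at hn
    have hnp : n * p ≤ (V.drop p).length := by
      rw [List.length_drop]; omega
    have hshift : (V.drop p).take (n * p) = V.take (n * p) := by
      obtain ⟨t, ht⟩ := h
      conv_rhs => rw [← ht]
      exact (List.take_append_of_le_length hnp).symm
    rw [Nat.add_one_mul, Nat.add_comm, List.take_add, hshift, ih (by omega), wpow_succ]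

theorem le_of_drop_prefix_drop {W : List α} {i j : ℕ} (h : W.drop i <+: W.drop j)
    (hj : j ≤ W.length) : j ≤ i := by
  have := h.length_le
  simp only [List.length_drop] at this
  omega

theorem exists_wpow_infix_of_drop_prefix_drop {W : List α} {i j : ℕ} (hij : i < j)
    (h : W.drop j <+: W.drop i) {d : ℕ} (hd : 0 < d) (hlen : i + d * (j - i) ≤ W.length) :
    ∃ u : List α, u ≠ [] ∧ wpow u d <:+: W := by
  set V := W.drop i
  have hperiod : V.drop (j - i) <+: V := by
    rwa [List.drop_drop, Nat.add_sub_cancel' hij.le]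
  have hdV : d * (j - i) ≤ V.length := by
    rw [List.length_drop]; omega
  refine ⟨V.take (j - i), ?_, ?_⟩
  · have hpV : j - i ≤ V.length := le_trans (Nat.le_mul_of_pos_left _ hd) hdV
    apply List.ne_nil_of_length_pos
    rw [List.length_take]
    omega
  · rw [← take_mul_eq_wpow_take_of_drop_prefix hperiod hdV]
    exact (V.take_prefix _).isInfix.trans (W.drop_suffix i).isInfix

theorem add_mul_sub_le_length {x d i j : ℕ} (hij : i < j) (hj : j < x / d) :
    i + d * (j - i) ≤ x := by
  have hd : 0 < d := (Nat.div_pos_iff.mp (Nat.zero_lt_of_lt hj)).1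
  have hjd : (j + 1) * d ≤ x := (Nat.le_div_iff_mul_le hd).mp hj
  have hsplit : d * (j - i) + d * i = d * j := by rw [← Nat.mul_add, Nat.sub_add_cancel hij.le]
  have hi : i ≤ d * i := Nat.le_mul_of_pos_left i hd
  nlinarith

theorem exists_wpow_infix_of_not_wComparable [LinearOrder α] {W : List α} {d i j : ℕ}
    (hij : i < j) (hj : j < W.length / d) (h : ¬ WComparable (W.drop i) (W.drop j)) :
    ∃ u : List α, u ≠ [] ∧ wpow u d <:+: W := by
  have hd : 0 < d := (Nat.div_pos_iff.mp (Nat.zero_lt_of_lt hj)).1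
  have hlen := add_mul_sub_le_length hij hj
  rw [WComparable, not_and_or, not_not, not_not] at h
  rcases h with hprefix | hprefix
  · have hjW : j ≤ W.length := (hj.trans_le (Nat.div_le_self _ _)).le
    exact absurd (le_of_drop_prefix_drop hprefix hjW) hij.not_ge
  · exact exists_wpow_infix_of_drop_prefix_drop hij hprefix hd hlen

end WordPeriod

open WordPeriod in
theorem stmt0_general (W : List α) (d : ℕ) :
    (∀ i j : ℕ, i < W.length / d → j < W.length / d → i ≠ j →
      WComparable (W.drop i) (W.drop j)) ∨
    ∃ u : List α, u ≠ [] ∧ wpow u d <:+: W := by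
  refine or_iff_not_imp_left.mpr fun h => ?_
  push Not at h
  obtain ⟨i, j, hi, hj, hne, hnc⟩ := h
  rcases hne.lt_or_gt with hlt | hgt
  · exact exists_wpow_infix_of_not_wComparable hlt hj hnc
  · exact exists_wpow_infix_of_not_wComparable hgt hi ((wComparable_comm _ _).not.mp hnc)

/-- In a word `W` of length `x`, either the first `x / d` suffixes are pairwise
comparable, or `W` contains a subword of the form `u ^ d` with `u` nonempty. -/
theorem stmt0 (W : List α) (d : ℕ) (hd : 1 ≤ d) :
    (∀ i j : ℕ, i < W.length / d → j < W.length / d → i ≠ j →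
      WComparable (W.drop i) (W.drop j)) ∨
    ∃ u : List α, u ≠ [] ∧ wpow u d <:+: W :=
  stmt0_general W d
end

section
/- If a word W contains n pairwise non-overlapping occurrences of the same subword u of length n·d, then W is either n-divisible or contains a subword of the form v^d for some nonempty word v. -/
/-!
Consider the `n` suffixes `u.drop s`, `s < n`. If one of them is a prefix of a longer one
`u.drop t`, then `u.drop t` has period `s - t < n`, and as it has length at least `d (s - t)` it
begins with `d` copies of its first `s - t` letters. Otherwise the suffixes are pairwise
incomparable for the prefix order. Sort them decreasingly and cut `W` at the start of the `i`-th
largest suffix inside the `i`-th occurrence of `u`: each factor begins with its suffix, and since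
no suffix is a prefix of another, the lexicographic order of the factors is that of the suffixes.
-/

variable {α : Type*} [LinearOrder α]

/-- A word `W` is `n`-divisible if `W = v ++ u₁ ++ ⋯ ++ uₙ` with the nonempty
words `u₁ ≻ u₂ ≻ ⋯ ≻ uₙ` strictly decreasing in the lexicographic order. -/
def NDivisible (n : ℕ) (W : List α) : Prop :=
  ∃ (v : List α) (u : Fin n → List α), (∀ i, u i ≠ []) ∧
    W = v ++ (List.ofFn u).flatten ∧
    ∀ i j : Fin n, i < j → List.Lex (· < ·) (u j) (u i)

theorem List.Lex.append_of_not_isPrefix {β : Type*} {r : β → β → Prop} {a b : List β}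
    (hab : List.Lex r a b) (hnp : ¬ a <+: b) (x y : List β) :
    List.Lex r (a ++ x) (b ++ y) := by
  induction hab with
  | nil => exact absurd List.nil_prefix hnp
  | rel h => exact List.Lex.rel h
  | cons _ ih => exact List.Lex.cons (ih fun h => hnp (List.cons_prefix_cons.mpr ⟨rfl, h⟩))

theorem List.not_drop_isPrefix_drop_of_lt {β : Type*} {l : List β} {s t : ℕ} (hst : s < t)
    (ht : t ≤ l.length) : ¬ l.drop s <+: l.drop t := fun h => by
  have := h.length_le
  simp only [List.length_drop] at this
  omega

theorem Function.Injective.exists_perm_strictAnti_comp {β : Type*} [LinearOrder β] {n : ℕ}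
    {f : Fin n → β} (hf : Function.Injective f) :
    ∃ σ : Equiv.Perm (Fin n), StrictAnti (f ∘ σ) :=
  ⟨Fin.revPerm.trans (Tuple.sort f),
    ((Tuple.monotone_sort f).strictMono_of_injective
      (hf.comp (Tuple.sort f).injective)).comp_strictAnti Fin.rev_strictAnti⟩

theorem List.flatten_ofFn_take_drop {β : Type*} (W : List β) :
    ∀ (n : ℕ) (c : ℕ → ℕ), Monotone c →
    (List.ofFn fun i : Fin n => (W.drop (c i)).take (c (i + 1) - c i)).flatten
      = (W.drop (c 0)).take (c n - c 0)
  | 0, c, _ => by simp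
  | n + 1, c, hc => by
    have htail := List.flatten_ofFn_take_drop W n (fun m => c (m + 1))
      (hc.comp fun _ _ h => Nat.succ_le_succ h)
    simp only [List.ofFn_succ, List.flatten_cons, Fin.val_succ, Fin.val_zero] at htail ⊢
    have h01 : c 0 ≤ c 1 := hc (by omega)
    have h1n : c 1 ≤ c (n + 1) := hc (by omega)
    rw [htail, show c (n + 1) - c 0 = (c 1 - c 0) + (c (n + 1) - c 1) by omega, List.take_add,
      List.drop_drop, Nat.add_sub_cancel' h01]

theorem wpow_take_isPrefix_of_drop_isPrefix {k : ℕ} (hk : 0 < k) :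
    ∀ (d : ℕ) {y : List α}, y.drop k <+: y → d * k ≤ y.length → wpow (y.take k) d <+: y
  | 0, _, _, _ => by simp [wpow]
  | 1, y, _, _ => by simpa [wpow] using y.take_prefix k
  | d + 2, y, hper, hlen => by
    have hlen' : (d + 1) * k + k ≤ y.length := by linarith
    have hk' : k ≤ (d + 1) * k := Nat.le_mul_of_pos_left k d.succ_pos
    have htake : (y.drop k).take k = y.take k :=
      (hper.take k).eq_of_length (by simp only [List.length_take, List.length_drop]; omega)
    have hrec := wpow_take_isPrefix_of_drop_isPrefix hk (d + 1) (y := y.drop k)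
      (by simpa using hper.drop k) (by rw [List.length_drop]; omega)
    rw [htake] at hrec
    obtain ⟨r, hr⟩ := hrec
    refine ⟨r, ?_⟩
    rw [wpow, List.replicate_succ, List.flatten_cons, ← wpow, List.append_assoc, hr,
      List.take_append_drop]

theorem exists_wpow_infix_of_drop_isPrefix_drop {u : List α} {n d s t : ℕ}
    (hu : u.length = n * d) (hd : 0 < d) (hts : t < s) (hsn : s < n)
    (hper : u.drop s <+: u.drop t) :
    ∃ v : List α, v ≠ [] ∧ wpow v d <:+: u := by
  have hper' : (u.drop t).drop (s - t) <+: u.drop t := by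
    rwa [List.drop_drop, Nat.add_sub_cancel' hts.le]
  have hlen : d * (s - t) + t ≤ u.length := by
    have : d * (s - t) + d * (t + 1) ≤ d * n := by rw [← mul_add]; gcongr; omega
    nlinarith
  have hpos : 0 < d * (s - t) := Nat.mul_pos hd (by omega)
  refine ⟨(u.drop t).take (s - t), ?_, ?_⟩
  · rw [← List.length_pos_iff, List.length_take, List.length_drop]
    omega
  · exact (wpow_take_isPrefix_of_drop_isPrefix (by omega) d hper'
      (by rw [List.length_drop]; omega)).isInfix.trans (u.drop_suffix t).isInfix

theorem nDivisible_of_isPrefix_drop {n : ℕ} {W : List α} (p : Fin n → ℕ) (Q : Fin n → List α)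
    (hne : ∀ i, Q i ≠ []) (hocc : ∀ i, Q i <+: W.drop (p i))
    (hsep : ∀ i j, i < j → p i + (Q i).length ≤ p j)
    (hlex : ∀ i j, i < j → List.Lex (· < ·) (Q j) (Q i))
    (hnp : ∀ i j, i < j → ¬ Q j <+: Q i) :
    NDivisible n W := by
  set c : ℕ → ℕ := fun m => if h : m < n then p ⟨m, h⟩ else W.length with hc_def
  have hcp (i : Fin n) : c i = p i := by simp [hc_def]
  have hgap (i : Fin n) : p i + (Q i).length ≤ c (i + 1) := by
    by_cases h : (i : ℕ) + 1 < n
    · simpa [hc_def, h] using hsep i ⟨i + 1, h⟩ (Fin.lt_def.mpr (Nat.lt_succ_self i))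
    · have hlen := (hocc i).length_le
      have hpos := List.length_pos_iff.mpr (hne i)
      simp only [List.length_drop] at hlen
      simp only [hc_def, h, dite_false]
      omega
  have hc : Monotone c := monotone_nat_of_le_succ fun m => by
    by_cases hm : m < n
    · have h₁ := hgap ⟨m, hm⟩
      have h₂ := hcp ⟨m, hm⟩
      simp only at h₁ h₂
      omega
    · simp [hc_def, hm, show ¬ m + 1 < n by omega]
  set F : Fin n → List α := fun i => (W.drop (c i)).take (c (i + 1) - c i)
  have hQF (i : Fin n) : Q i <+: F i :=
    List.prefix_take_iff.mpr ⟨hcp i ▸ hocc i, by have := hgap i; have := hcp i; omega⟩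
  refine ⟨W.take (c 0), F, fun i => (hQF i).ne_nil (hne i), ?_, fun i j hij => ?_⟩
  · rw [List.flatten_ofFn_take_drop W n c hc, show c n = W.length by simp [hc_def],
      List.take_of_length_le (l := W.drop (c 0)) (by simp), List.take_append_drop]
  · obtain ⟨x, hx⟩ := hQF j
    obtain ⟨y, hy⟩ := hQF i
    rw [← hx, ← hy]
    exact (hlex i j hij).append_of_not_isPrefix (hnp i j hij) x y

theorem stmt2_general (W u : List α) (n d : ℕ) (hd : 1 ≤ d)
    (hu : u.length = n * d) (pos : Fin n → ℕ)
    (hocc : ∀ i, (W.drop (pos i)).take u.length = u)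
    (hdisj : ∀ i j : Fin n, i < j → pos i + u.length ≤ pos j) :
    NDivisible n W ∨ ∃ v : List α, v ≠ [] ∧ wpow v d <:+: W := by
  have hnu : n ≤ u.length := hu ▸ Nat.le_mul_of_pos_right n hd
  have hprefix (i : Fin n) : u <+: W.drop (pos i) := hocc i ▸ List.take_prefix _ _
  by_cases hper : ∃ s t, t < s ∧ s < n ∧ u.drop s <+: u.drop t
  · obtain ⟨s, t, hts, hsn, hst⟩ := hper
    obtain ⟨v, hv, hvu⟩ := exists_wpow_infix_of_drop_isPrefix_drop hu hd hts hsn hst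
    exact .inr ⟨v, hv, hvu.trans ((hprefix ⟨s, hsn⟩).isInfix.trans (W.drop_suffix _).isInfix)⟩
  push Not at hper
  have hincomp (s t : Fin n) (hst : s ≠ t) : ¬ u.drop s <+: u.drop t := by
    rcases lt_or_gt_of_ne hst with h | h
    · exact List.not_drop_isPrefix_drop_of_lt h (by omega)
    · exact hper s t h s.isLt
  obtain ⟨σ, hσ⟩ := Function.Injective.exists_perm_strictAnti_comp (f := fun s : Fin n => u.drop s)
    fun s t h => by_contra fun hst => hincomp s t hst ⟨[], (List.append_nil _).trans h⟩
  refine .inl (nDivisible_of_isPrefix_drop (fun i => pos i + σ i) (fun i => u.drop (σ i))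
    (fun i => ?_) (fun i => ?_) (fun i j hij => ?_) (fun i j hij => hσ hij)
    (fun i j hij => hincomp _ _ (σ.injective.ne hij.ne')))
  · rw [← List.length_pos_iff, List.length_drop]
    have := (σ i).isLt
    omega
  · simpa only [List.drop_drop] using (hprefix i).drop (σ i)
  · have := hdisj i j hij
    have := (σ i).isLt
    simp only [List.length_drop]
    omega

/-- If `W` contains `n` pairwise non-overlapping occurrences of the same subword `u`
of length `n * d`, then `W` is `n`-divisible or contains a subword `v ^ d`. -/
theorem stmt2 (W u : List α) (n d : ℕ) (hn : 1 ≤ n) (hd : 1 ≤ d)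
    (hu : u.length = n * d) (pos : Fin n → ℕ)
    (hin : ∀ i, pos i + u.length ≤ W.length)
    (hocc : ∀ i, (W.drop (pos i)).take u.length = u)
    (hdisj : ∀ i j : Fin n, i < j → pos i + u.length ≤ pos j) :
    NDivisible n W ∨ ∃ v : List α, v ≠ [] ∧ wpow v d <:+: W :=
  stmt2_general W u n d hd hu pos hocc hdisj
end

section
/- Let p ≥ 2 and k ≥ 1. Let S be a finite sequence of words of length k, each consisting of (k−1) symbols '0' and exactly one symbol '1'. Suppose S satisfies: for every position s with 1 ≤ s ≤ k, among any p terms of S having the '1' in position s, some term strictly between the first and the p-th of them (in the order of S) has its '1' in a position strictly smaller than s. Then the length of S is at most p^k − 1. -/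
private lemma stmt4_geom (p : ℕ) (hp : 1 ≤ p) :
    ∀ a : ℕ, ∑ j ∈ Finset.range a, (p - 1) * p ^ j = p ^ a - 1 := by
  intro a
  induction a with
  | zero => simp
  | succ n ih =>
    rw [Finset.sum_range_succ, ih, pow_succ, mul_comm (p ^ n) p]
    have h1 : 1 ≤ p ^ n := Nat.one_le_pow _ _ (by omega)
    have e1 : (p - 1) * p ^ n = p * p ^ n - p ^ n := by rw [Nat.sub_mul, one_mul]
    have h3 : p ^ n ≤ p * p ^ n := Nat.le_mul_of_pos_left _ (by omega)
    omega

/-- Process lemma: a sequence of 0-1 words of length `k`, each containing exactly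
one `1`, such that among any `p` terms having their `1` at the same position `s`,
some term strictly between the first and the `p`-th has its `1` at a position
strictly smaller than `s`, has length at most `p ^ k - 1`. -/
theorem stmt4 (p k N : ℕ) (hp : 2 ≤ p) (hk : 1 ≤ k)
    (S : Fin N → Fin k → Bool)
    (hone : ∀ i, ∃! s, S i s = true)
    (hcond : ∀ (s : Fin k) (idx : Fin p → Fin N), StrictMono idx →
      (∀ a, S (idx a) s = true) →
      ∃ j : Fin N, idx ⟨0, by omega⟩ < j ∧ j < idx ⟨p - 1, by omega⟩ ∧
        ∃ s' : Fin k, s' < s ∧ S j s' = true) :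
    N ≤ p ^ k - 1 := by
  classical
  rcases Nat.eq_zero_or_pos N with hN0 | hN0
  · omega
  -- the position of the unique 1 in word i
  set f : Fin N → Fin k := fun i => (hone i).choose with hf
  have hfS : ∀ i, S i (f i) = true := fun i => (hone i).choose_spec.1
  have hfU : ∀ i s, S i s = true → s = f i := fun i s h => ((hone i).choose_spec.2 s h)
  -- active occurrences of position t up to index i
  set A : Fin N → Fin k → Finset (Fin N) := fun i t =>
    Finset.univ.filter (fun j => j ≤ i ∧ f j = t ∧ ∀ j', j < j' → j' ≤ i → t ≤ f j') with hA
  set m : Fin N → Fin k → ℕ := fun i t => (A i t).card with hm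
  set w : Fin k → ℕ := fun t => p ^ (k - 1 - t.1) with hw
  set v : Fin N → ℕ := fun i => ∑ t, m i t * w t with hv
  have hmemA : ∀ i t j, j ∈ A i t ↔
      (j ≤ i ∧ f j = t ∧ ∀ j', j < j' → j' ≤ i → t ≤ f j') := by
    intro i t j
    simp [hA]
  -- each digit is at most p - 1
  have hmle : ∀ i t, m i t ≤ p - 1 := by
    intro i t
    by_contra h
    have hcard : p ≤ (A i t).card := by simp only [hm] at h; omega
    set e := Finset.orderEmbOfCardLe (A i t) hcard with he
    have hmem : ∀ a, e a ∈ A i t := fun a => Finset.orderEmbOfCardLe_mem _ hcard a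
    obtain ⟨j, hj1, hj2, s', hs', hSs'⟩ := hcond t (fun a => e a) e.strictMono (by
      intro a
      have := ((hmemA i t (e a)).1 (hmem a)).2.1
      rw [← this]; exact hfS _)
    have hfj : f j = s' := (hfU j s' hSs').symm
    have h0 := (hmemA i t _).1 (hmem ⟨0, by omega⟩)
    have hlast := (hmemA i t _).1 (hmem ⟨p - 1, by omega⟩)
    have hji : j ≤ i := le_of_lt (lt_of_lt_of_le hj2 hlast.1)
    have hle : t ≤ f j := h0.2.2 j hj1 hji
    rw [hfj] at hle
    exact absurd hs' (not_lt.2 hle)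
  -- key step: v increases by at least 1 at each step
  have key : ∀ (n : ℕ) (h : n + 1 < N), v ⟨n, by omega⟩ + 1 ≤ v ⟨n + 1, h⟩ := by
    intro n h
    set i : Fin N := ⟨n, by omega⟩ with hi
    set i' : Fin N := ⟨n + 1, h⟩ with hi'
    set s : Fin k := f i' with hs
    have hii' : i ≤ i' := by rw [Fin.le_def]; simp [hi, hi']
    -- A i' t for t > s is empty
    have hA_gt : ∀ t, s < t → A i' t = ∅ := by
      intro t hst
      ext j
      simp only [Finset.notMem_empty, iff_false, hmemA]
      rintro ⟨hj1, hj2, hj3⟩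
      rcases eq_or_lt_of_le hj1 with hj | hj
      · -- j = i' so f j = s, contradicting s < t = f j
        have hv2 := congrArg Fin.val hj2
        have hv3 : f j = s := by rw [hj, ← hs]
        have hv4 := congrArg Fin.val hv3
        rw [Fin.lt_def] at hst
        omega
      · have h4 : t ≤ s := hj3 i' hj (le_refl _)
        exact absurd hst (not_lt.2 h4)
    -- A i' t for t < s equals A i t
    have hA_lt : ∀ t, t < s → A i' t = A i t := by
      intro t hts
      ext j
      simp only [hmemA]
      constructor
      · rintro ⟨hj1, hj2, hj3⟩
        have hjne : j ≠ i' := by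
          intro hj
          have hv3 : f j = s := by rw [hj, ← hs]
          rw [hj2] at hv3
          rw [hv3] at hts
          exact lt_irrefl _ hts
        have hji : j ≤ i := by
          rw [Fin.le_def] at hj1 ⊢
          have : j.1 ≠ i'.1 := fun hh => hjne (Fin.ext hh)
          simp only [hi, hi'] at *
          omega
        exact ⟨hji, hj2, fun j' h1 h2 => hj3 j' h1 (le_trans h2 hii')⟩
      · rintro ⟨hj1, hj2, hj3⟩
        refine ⟨le_trans hj1 hii', hj2, ?_⟩
        intro j' h1 h2
        rcases eq_or_lt_of_le h2 with hj | hj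
        · rw [hj, ← hs]; exact le_of_lt hts
        · refine hj3 j' h1 ?_
          rw [Fin.lt_def] at hj; rw [Fin.le_def]
          simp only [hi, hi'] at *
          omega
    -- A i' s is A i s plus i'
    have hA_s : A i' s = insert i' (A i s) := by
      ext j
      simp only [Finset.mem_insert, hmemA]
      constructor
      · rintro ⟨hj1, hj2, hj3⟩
        rcases eq_or_lt_of_le hj1 with hj | hj
        · left; exact Fin.ext (by rw [hj])
        · right
          have hji : j ≤ i := by
            rw [Fin.lt_def] at hj; rw [Fin.le_def]
            simp only [hi, hi'] at *
            omega
          exact ⟨hji, hj2, fun j' h1 h2 => hj3 j' h1 (le_trans h2 hii')⟩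
      · rintro (hj | ⟨hj1, hj2, hj3⟩)
        · subst hj
          exact ⟨le_refl _, rfl, fun j' h1 h2 => absurd (lt_of_lt_of_le h1 h2) (lt_irrefl _)⟩
        · refine ⟨le_trans hj1 hii', hj2, ?_⟩
          intro j' h1 h2
          rcases eq_or_lt_of_le h2 with hj | hj
          · rw [hj, ← hs]
          · refine hj3 j' h1 ?_
            rw [Fin.lt_def] at hj; rw [Fin.le_def]
            simp only [hi, hi'] at *
            omega
    have hi'nmem : i' ∉ A i s := by
      rw [hmemA]
      rintro ⟨hj1, -, -⟩
      rw [Fin.le_def] at hj1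
      simp only [hi, hi'] at hj1
      omega
    have hwpos : 1 ≤ w s := Nat.one_le_pow _ _ (by omega)
    -- tail geometric bound
    have tail : ∑ t ∈ Finset.univ.filter (fun t => s < t), (p - 1) * w t
        = p ^ (k - 1 - s.1) - 1 := by
      have step1 : ∑ t ∈ Finset.univ.filter (fun t => s < t), (p - 1) * w t
          = ∑ t : Fin k,
              (fun nn : ℕ => if s.1 < nn then (p - 1) * p ^ (k - 1 - nn) else 0) t.1 := by
        rw [Finset.sum_filter]
        apply Finset.sum_congr rfl
        intro t _
        simp only [hw, Fin.lt_def]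
      rw [step1,
        Fin.sum_univ_eq_sum_range (fun nn : ℕ => if s.1 < nn then (p - 1) * p ^ (k - 1 - nn) else 0) k,
        ← Finset.sum_filter]
      have hfilter : (Finset.range k).filter (fun nn => s.1 < nn)
          = Finset.Ico (s.1 + 1) k := by
        ext nn
        simp only [Finset.mem_filter, Finset.mem_range, Finset.mem_Ico]
        omega
      rw [hfilter, Finset.sum_Ico_eq_sum_range]
      have hs1 : s.1 < k := s.2
      have hre : ∀ j ∈ Finset.range (k - (s.1 + 1)),
          (p - 1) * p ^ (k - 1 - (s.1 + 1 + j))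
          = (p - 1) * p ^ (k - (s.1 + 1) - 1 - j) := by
        intro j hj
        simp only [Finset.mem_range] at hj
        congr 2
        omega
      rw [Finset.sum_congr rfl hre,
        Finset.sum_range_reflect (fun j => (p - 1) * p ^ j) (k - (s.1 + 1)),
        stmt4_geom p (by omega)]
      have hexp : k - (s.1 + 1) = k - 1 - s.1 := by omega
      rw [hexp]
    have htail_le : ∑ t ∈ Finset.univ.filter (fun t => s < t), m i t * w t
        ≤ w s - 1 := by
      calc ∑ t ∈ Finset.univ.filter (fun t => s < t), m i t * w t
          ≤ ∑ t ∈ Finset.univ.filter (fun t => s < t), (p - 1) * w t :=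
            Finset.sum_le_sum (fun t _ => Nat.mul_le_mul_right _ (hmle i t))
        _ = p ^ (k - 1 - s.1) - 1 := tail
        _ = w s - 1 := rfl
    -- split sums
    have hsplit : ∀ (g : Fin k → ℕ), ∑ t, g t =
        (g s + ∑ t ∈ Finset.univ.filter (fun t => t < s), g t)
        + ∑ t ∈ Finset.univ.filter (fun t => s < t), g t := by
      intro g
      have e1 : Finset.univ.filter (fun t : Fin k => ¬ t ≤ s)
          = Finset.univ.filter (fun t => s < t) := by
        ext t; simp [not_le]
      have e2 : Finset.univ.filter (fun t : Fin k => t ≤ s)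
          = insert s (Finset.univ.filter (fun t => t < s)) := by
        ext t
        simp only [Finset.mem_filter, Finset.mem_univ, true_and, Finset.mem_insert]
        rw [le_iff_lt_or_eq]
        tauto
      rw [← Finset.sum_filter_add_sum_filter_not Finset.univ (fun t => t ≤ s) g, e1, e2,
        Finset.sum_insert (by simp)]
    have hvi : v i = (m i s * w s + ∑ t ∈ Finset.univ.filter (fun t => t < s), m i t * w t)
        + ∑ t ∈ Finset.univ.filter (fun t => s < t), m i t * w t := hsplit _
    have hvi' : v i' = (m i' s * w s + ∑ t ∈ Finset.univ.filter (fun t => t < s), m i' t * w t)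
        + ∑ t ∈ Finset.univ.filter (fun t => s < t), m i' t * w t := hsplit _
    have h1 : m i' s = m i s + 1 := by
      simp only [hm, hA_s]
      rw [Finset.card_insert_of_notMem hi'nmem]
    have h2 : ∑ t ∈ Finset.univ.filter (fun t => t < s), m i' t * w t
        = ∑ t ∈ Finset.univ.filter (fun t => t < s), m i t * w t := by
      apply Finset.sum_congr rfl
      intro t ht
      simp only [Finset.mem_filter] at ht
      simp only [hm, hA_lt t ht.2]
    have h3 : ∑ t ∈ Finset.univ.filter (fun t => s < t), m i' t * w t = 0 := by
      apply Finset.sum_eq_zero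
      intro t ht
      simp only [Finset.mem_filter] at ht
      simp only [hm, hA_gt t ht.2, Finset.card_empty, zero_mul]
    rw [hvi, hvi', h1, h2, h3, add_mul, one_mul]
    omega
  -- v is at least 1
  have hvpos : ∀ i : Fin N, 1 ≤ v i := by
    intro i
    have hiA : i ∈ A i (f i) := by
      rw [hmemA]
      exact ⟨le_refl _, rfl, fun j' h1 h2 => absurd (lt_of_lt_of_le h1 h2) (lt_irrefl _)⟩
    have hm1 : 1 ≤ m i (f i) := Finset.card_pos.2 ⟨i, hiA⟩
    have hw1 : 1 ≤ w (f i) := Nat.one_le_pow _ _ (by omega)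
    calc 1 ≤ m i (f i) * w (f i) := Nat.mul_pos hm1 hw1
      _ ≤ ∑ t, m i t * w t :=
        Finset.single_le_sum (f := fun t => m i t * w t)
          (fun t _ => Nat.zero_le _) (Finset.mem_univ (f i))
  -- v is at most p^k - 1
  have hvmax : ∀ i : Fin N, v i ≤ p ^ k - 1 := by
    intro i
    have hb : v i ≤ ∑ t : Fin k, (p - 1) * w t :=
      Finset.sum_le_sum (fun t _ => Nat.mul_le_mul_right _ (hmle i t))
    have htot : ∑ t : Fin k, (p - 1) * w t = p ^ k - 1 := by
      have step1 : ∑ t : Fin k, (p - 1) * w t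
          = ∑ t : Fin k, (fun nn : ℕ => (p - 1) * p ^ (k - 1 - nn)) t.1 :=
        Finset.sum_congr rfl (fun t _ => rfl)
      rw [step1, Fin.sum_univ_eq_sum_range (fun nn : ℕ => (p - 1) * p ^ (k - 1 - nn)) k]
      have hre : ∀ j ∈ Finset.range k,
          (p - 1) * p ^ (k - 1 - j) = (p - 1) * p ^ (k - 1 - j) := fun _ _ => rfl
      have : ∀ j ∈ Finset.range k, (p - 1) * p ^ (k - 1 - j)
          = (fun j => (p - 1) * p ^ j) (k - 1 - j) := fun _ _ => rfl
      rw [Finset.sum_congr rfl this]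
      have hrefl := Finset.sum_range_reflect (fun j => (p - 1) * p ^ j) k
      have harg : ∀ j ∈ Finset.range k, (fun j => (p - 1) * p ^ j) (k - 1 - j)
          = (p - 1) * p ^ (k - 1 - j) := fun _ _ => rfl
      rw [Finset.sum_range_reflect (fun j => (p - 1) * p ^ j) k]
      exact stmt4_geom p (by omega) k
    omega
  -- conclude: n + 1 ≤ v ⟨n⟩
  have hmain : ∀ (n : ℕ) (h : n < N), n + 1 ≤ v ⟨n, h⟩ := by
    intro n
    induction n with
    | zero => intro h; exact hvpos _
    | succ n ih =>
      intro h
      have h1 := key n h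
      have h2 := ih (by omega)
      omega
  have hlast := hmain (N - 1) (by omega)
  have := hvmax ⟨N - 1, by omega⟩
  omega
end

section
/- The number of multilinear words of length n over an alphabet of n ordered letters (i.e., permutations of the letters) that are not m-divisible is at most (m−1)^{2n}. -/
open Finset

namespace Stmt5Aux

variable {n : ℕ}

/-- The set of "decreasing chains" of `π` ending at `i`. -/
def chains (π : Equiv.Perm (Fin n)) (i : Fin n) : Finset (Finset (Fin n)) :=
  Finset.univ.filter (fun t : Finset (Fin n) =>
    i ∈ t ∧ (∀ x ∈ t, x ≤ i) ∧ ∀ x ∈ t, ∀ y ∈ t, x < y → π y < π x)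

/-- Length of the longest decreasing subsequence ending at `i`. -/
def a (π : Equiv.Perm (Fin n)) (i : Fin n) : ℕ :=
  (chains π i).sup Finset.card

lemma singleton_mem_chains (π : Equiv.Perm (Fin n)) (i : Fin n) :
    ({i} : Finset (Fin n)) ∈ chains π i := by
  simp only [chains, mem_filter, mem_univ, true_and, mem_singleton]
  exact ⟨fun x hx => le_of_eq hx, fun x hx y hy hxy => by
    subst hx; subst hy; exact absurd hxy (lt_irrefl _)⟩

lemma one_le_a (π : Equiv.Perm (Fin n)) (i : Fin n) : 1 ≤ a π i := by
  have h := Finset.le_sup (f := Finset.card) (singleton_mem_chains π i)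
  rwa [Finset.card_singleton] at h

lemma a_lt_a (π : Equiv.Perm (Fin n)) {i j : Fin n} (hij : i < j) (hπ : π j < π i) :
    a π i < a π j := by
  obtain ⟨t, ht, hcard⟩ := Finset.exists_mem_eq_sup (chains π i)
    ⟨{i}, singleton_mem_chains π i⟩ Finset.card
  have hcard' : a π i = t.card := hcard
  simp only [chains, mem_filter, mem_univ, true_and] at ht
  obtain ⟨hit, hle, hanti⟩ := ht
  have hjt : j ∉ t := fun h => absurd hij (not_lt.2 (hle j h))
  have hmem : insert j t ∈ chains π j := by
    simp only [chains, mem_filter, mem_univ, true_and]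
    refine ⟨mem_insert_self _ _, fun x hx => ?_, fun x hx y hy hxy => ?_⟩
    · rcases mem_insert.1 hx with hxj | hx
      · exact le_of_eq hxj
      · exact le_of_lt (lt_of_le_of_lt (hle x hx) hij)
    · rcases mem_insert.1 hx with hxj | hx
      · rcases mem_insert.1 hy with hyj | hy
        · rw [hxj, hyj] at hxy; exact absurd hxy (lt_irrefl _)
        · rw [hxj] at hxy
          exact absurd (lt_of_lt_of_le hxy (hle y hy)) (not_lt.2 (le_of_lt hij))
      · rcases mem_insert.1 hy with hyj | hy
        · rw [hyj]
          rcases lt_or_eq_of_le (hle x hx) with hxi | hxi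
          · exact lt_trans hπ (hanti x hx i hit hxi)
          · rw [← hxi] at hπ; exact hπ
        · exact hanti x hx y hy hxy
  have : (insert j t).card ≤ a π j := Finset.le_sup (f := Finset.card) hmem
  rw [Finset.card_insert_of_notMem hjt] at this
  omega

lemma a_lt_m {m : ℕ} (π : Equiv.Perm (Fin n))
    (hπ : ¬ ∃ f : Fin m → Fin n, StrictMono f ∧ StrictAnti (π ∘ f)) (i : Fin n) :
    a π i < m := by
  by_contra h
  push_neg at h
  obtain ⟨t, ht, hcard⟩ := Finset.exists_mem_eq_sup (chains π i)
    ⟨{i}, singleton_mem_chains π i⟩ Finset.card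
  have hcard' : a π i = t.card := hcard
  simp only [chains, mem_filter, mem_univ, true_and] at ht
  obtain ⟨-, -, hanti⟩ := ht
  have hm : m ≤ t.card := by omega

  refine hπ ⟨fun k => t.orderEmbOfFin rfl (Fin.castLE hm k), ?_, ?_⟩
  · exact (t.orderEmbOfFin rfl).strictMono.comp (Fin.strictMono_castLE hm)
  · intro x y hxy
    have hlt : t.orderEmbOfFin rfl (Fin.castLE hm x) < t.orderEmbOfFin rfl (Fin.castLE hm y) :=
      (t.orderEmbOfFin rfl).strictMono (Fin.strictMono_castLE hm hxy)
    exact hanti _ (t.orderEmbOfFin_mem rfl _) _ (t.orderEmbOfFin_mem rfl _) hlt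

lemma strictMonoOn_class {m : ℕ} (π : Equiv.Perm (Fin n))
    (hπ : ¬ ∃ f : Fin m → Fin n, StrictMono f ∧ StrictAnti (π ∘ f))
    {i j : Fin n} (hij : i < j) (hc : a π i = a π j) : π i < π j := by
  rcases lt_trichotomy (π i) (π j) with h | h | h
  · exact h
  · exact absurd (π.injective h) (ne_of_lt hij)
  · exact absurd hc (ne_of_lt (a_lt_a π hij h))


/-- Two maps that are strictly increasing on `S` and map `S` into a set `T` of the
same cardinality agree on `S`. -/
lemma eq_on_class {n : ℕ} (π σ : Equiv.Perm (Fin n)) (S T : Finset (Fin n))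
    (hπS : ∀ x ∈ S, π x ∈ T) (hσS : ∀ x ∈ S, σ x ∈ T)
    (hcardT : T.card = S.card)
    (hπmono : ∀ x ∈ S, ∀ y ∈ S, x < y → π x < π y)
    (hσmono : ∀ x ∈ S, ∀ y ∈ S, x < y → σ x < σ y)
    {i : Fin n} (hiS : i ∈ S) : π i = σ i := by
  have hmπ : StrictMono (fun x : Fin S.card => π (S.orderEmbOfFin rfl x)) := fun x y hxy =>
    hπmono _ (S.orderEmbOfFin_mem rfl x) _ (S.orderEmbOfFin_mem rfl y)
      ((S.orderEmbOfFin rfl).strictMono hxy)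
  have hmσ : StrictMono (fun x : Fin S.card => σ (S.orderEmbOfFin rfl x)) := fun x y hxy =>
    hσmono _ (S.orderEmbOfFin_mem rfl x) _ (S.orderEmbOfFin_mem rfl y)
      ((S.orderEmbOfFin rfl).strictMono hxy)
  have hπe : (fun x : Fin S.card => π (S.orderEmbOfFin rfl x)) = T.orderEmbOfFin hcardT :=
    Finset.orderEmbOfFin_unique hcardT (fun x => hπS _ (S.orderEmbOfFin_mem rfl x)) hmπ
  have hσe : (fun x : Fin S.card => σ (S.orderEmbOfFin rfl x)) = T.orderEmbOfFin hcardT :=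
    Finset.orderEmbOfFin_unique hcardT (fun x => hσS _ (S.orderEmbOfFin_mem rfl x)) hmσ
  have hir : i ∈ Set.range (S.orderEmbOfFin rfl) := by
    rw [Finset.range_orderEmbOfFin]; exact hiS
  obtain ⟨x, hx⟩ := hir
  calc π i = π (S.orderEmbOfFin rfl x) := by rw [hx]
    _ = T.orderEmbOfFin hcardT x := congrFun hπe x
    _ = σ (S.orderEmbOfFin rfl x) := (congrFun hσe x).symm
    _ = σ i := by rw [hx]

end Stmt5Aux

open Stmt5Aux in
/-- The number of permutations of `{1,…,n}` with no decreasing subsequence of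
length `m` (equivalently, multilinear words of length `n` that are not
`m`-divisible) is at most `(m - 1) ^ (2 * n)`. -/
theorem stmt5 (n m : ℕ) (hm : 1 ≤ m) :
    Nat.card {π : Equiv.Perm (Fin n) //
      ¬ ∃ f : Fin m → Fin n, StrictMono f ∧ StrictAnti (π ∘ f)} ≤
      (m - 1) ^ (2 * n) := by
  rcases hm.eq_or_lt with rfl | hm2
  · -- m = 1
    rcases Nat.eq_zero_or_pos n with rfl | hn
    · -- n = 0
      calc Nat.card {π : Equiv.Perm (Fin 0) //
            ¬ ∃ f : Fin 1 → Fin 0, StrictMono f ∧ StrictAnti (π ∘ f)}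
          ≤ Nat.card (Equiv.Perm (Fin 0)) :=
            Nat.card_le_card_of_injective _ Subtype.val_injective
        _ ≤ (1 - 1) ^ (2 * 0) := by simp [Nat.card_eq_fintype_card]
    · have : IsEmpty {π : Equiv.Perm (Fin n) //
          ¬ ∃ f : Fin 1 → Fin n, StrictMono f ∧ StrictAnti (π ∘ f)} := by
        refine ⟨fun ⟨π, hπ⟩ => hπ ⟨fun _ => ⟨0, hn⟩, ?_, ?_⟩⟩
        · intro x y hxy; exact absurd (Subsingleton.elim x y) (ne_of_lt hxy)
        · intro x y hxy; exact absurd (Subsingleton.elim x y) (ne_of_lt hxy)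
      rw [Nat.card_of_isEmpty]
      exact Nat.zero_le _
  · -- m ≥ 2
    set P := fun π : Equiv.Perm (Fin n) =>
      ¬ ∃ f : Fin m → Fin n, StrictMono f ∧ StrictAnti (π ∘ f) with hP
    have hc1 : ∀ (π : Equiv.Perm (Fin n)), P π → ∀ i, a π i - 1 < m - 1 := by
      intro π hπ i
      have h1 := one_le_a π i
      have h2 := a_lt_m π hπ i
      omega
    set F : {π : Equiv.Perm (Fin n) // P π} → (Fin n → Fin (m-1)) × (Fin n → Fin (m-1)) :=
      fun π => (fun i => ⟨a π.1 i - 1, hc1 π.1 π.2 i⟩,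
                fun v => ⟨a π.1 (π.1.symm v) - 1, hc1 π.1 π.2 _⟩) with hF
    have hinj : Function.Injective F := by
      rintro ⟨π, hπ⟩ ⟨σ, hσ⟩ h
      simp only [hF, Prod.mk.injEq] at h
      obtain ⟨h1, h2⟩ := h
      have h1' : ∀ i, a π i = a σ i := by
        intro i
        have := congrFun h1 i
        have e := Fin.mk.injEq _ (hc1 π hπ i) _ (hc1 σ hσ i) ▸ this
        have h1i := one_le_a π i
        have h1i' := one_le_a σ i
        have : a π i - 1 = a σ i - 1 := Fin.mk.inj_iff.1 this
        omega
      have h2' : ∀ v, a π (π.symm v) = a σ (σ.symm v) := by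
        intro v
        have := congrFun h2 v
        have : a π (π.symm v) - 1 = a σ (σ.symm v) - 1 := Fin.mk.inj_iff.1 this
        have := one_le_a π (π.symm v)
        have := one_le_a σ (σ.symm v)
        omega
      apply Subtype.ext
      apply Equiv.ext
      intro i
      show π i = σ i
      have himg : (Finset.univ.filter (fun x => a π x = a π i)).image π
          = Finset.univ.filter (fun v => a π (π.symm v) = a π i) := by
        apply Finset.ext
        intro v
        simp only [Finset.mem_image, mem_filter, mem_univ, true_and]
        constructor
        · rintro ⟨x, hx, rfl⟩; rwa [π.symm_apply_apply]
        · intro hv; exact ⟨π.symm v, hv, π.apply_symm_apply v⟩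
      refine eq_on_class π σ (Finset.univ.filter (fun x => a π x = a π i))
        (Finset.univ.filter (fun v => a π (π.symm v) = a π i)) ?_ ?_ ?_ ?_ ?_ (by simp)
      · intro x hx
        rw [← himg]; exact Finset.mem_image_of_mem π hx
      · intro x hx
        simp only [mem_filter, mem_univ, true_and] at hx ⊢
        rw [h2', σ.symm_apply_apply, ← h1' x]; exact hx
      · rw [← himg, Finset.card_image_of_injective _ π.injective]
      · intro x hx y hy hxy
        simp only [mem_filter, mem_univ, true_and] at hx hy
        exact strictMonoOn_class π hπ hxy (hx.trans hy.symm)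
      · intro x hx y hy hxy
        simp only [mem_filter, mem_univ, true_and] at hx hy
        exact strictMonoOn_class σ hσ hxy
          (by rw [← h1', ← h1', hx, hy])
    calc Nat.card {π : Equiv.Perm (Fin n) // P π}
        ≤ Nat.card ((Fin n → Fin (m-1)) × (Fin n → Fin (m-1))) :=
          Nat.card_le_card_of_injective F hinj
      _ = (m - 1) ^ (2 * n) := by
          simp [Nat.card_eq_fintype_card, two_mul, pow_add]
end

section
/- Every finite-dimensional associative algebra over a commutative ring is finitely generated (as an algebra), every element is algebraic, and the algebra satisfies an admissible multilinear polynomial identity; in particular, an algebra of dimension n over a commutative ring satisfies the standard identity S_{n+1} = 0. -/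
/-- An alternating map in `n+1` arguments vanishes on a module spanned by `n`
elements. -/
lemma alt_vanish {R M N : Type*} [CommRing R] [AddCommGroup M] [Module R M]
    [AddCommGroup N] [Module R N] {n : ℕ}
    (F : M [⋀^Fin (n + 1)]→ₗ[R] N) (v : Fin n → M)
    (hspan : Submodule.span R (Set.range v) = ⊤) (a : Fin (n + 1) → M) :
    F a = 0 := by
  have hmem : ∀ i, a i ∈ Submodule.span R (Set.range v) := by
    intro i; rw [hspan]; trivial
  choose c hc using fun i => (Submodule.mem_span_range_iff_exists_fun R).mp (hmem i)
  have ha : a = fun i => ∑ j, c i j • v j := by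
    funext i; exact (hc i).symm
  rw [ha]
  rw [show ⇑F = ⇑F.toMultilinearMap from rfl,
    F.toMultilinearMap.map_sum (g := fun i j => c i j • v j)]
  apply Finset.sum_eq_zero
  intro f _
  have h1 : F.toMultilinearMap (fun i => c i (f i) • v (f i))
      = (∏ i, c i (f i)) • F.toMultilinearMap (fun i => v (f i)) :=
    F.toMultilinearMap.map_smul_univ (fun i => c i (f i)) (fun i => v (f i))
  rw [h1]
  have hninj : ¬ Function.Injective f := by
    intro hf
    exact absurd (Fintype.card_le_of_injective f hf) (by simp)
  have : F (fun i => v (f i)) = 0 :=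
    F.map_eq_zero_of_not_injective _ (fun h => hninj (Function.Injective.of_comp h))
  rw [show F.toMultilinearMap (fun i => v (f i)) = F (fun i => v (f i)) from rfl, this,
    smul_zero]

/-- Any associative algebra over a commutative ring spanned as a module by `n`
elements is finitely generated as an algebra, all of its elements are algebraic
(integral), and it satisfies the standard identity `S_{n+1} = 0`, which is an
admissible multilinear polynomial identity. -/
theorem stmt11 (R A : Type*) [CommRing R] [Ring A] [Algebra R A]
    (n : ℕ) (v : Fin n → A) (hspan : Submodule.span R (Set.range v) = ⊤) :
    Algebra.FiniteType R A ∧ (∀ a : A, IsIntegral R a) ∧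
    ∀ a : Fin (n + 1) → A,
      ∑ σ : Equiv.Perm (Fin (n + 1)),
        (Equiv.Perm.sign σ : ℤ) • (List.ofFn fun i => a (σ i)).prod = 0 := by
  have hfin : Module.Finite R A :=
    ⟨by rw [Submodule.fg_def]; exact ⟨Set.range v, Set.finite_range v, hspan⟩⟩
  refine ⟨inferInstance, fun a => IsIntegral.of_finite R a, fun a => ?_⟩
  have := alt_vanish ((MultilinearMap.mkPiAlgebraFin R (n + 1) A).alternatization)
    v hspan a
  rw [MultilinearMap.alternatization_apply] at this
  simpa [MultilinearMap.domDomCongr_apply, MultilinearMap.mkPiAlgebraFin_apply,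
    Units.smul_def] using this
end

section
/- Let W be a word over a totally ordered alphabet. Suppose W contains 2n−1 pairwise disjoint subwords of the form x^{p_1}v'_1, …, x^{p_{2n-1}}v'_{2n-1} where each p_i > n, x is a fixed nonempty word, and each v'_i is a word of the same length as x that is comparable with x (not a prefix relation) and distinct as specified. Then if among v'_1,…,v'_{2n-1} at least n are lexicographically greater than x, W is n-divisible; the same holds if at least n are lexicographically smaller. In particular, if W contains 2n−1 disjoint subwords, each a power z^m with m > n, whose periods are pairwise not strongly comparable, then W is n-divisible. -/
/-!
Pick `n` of the occurrences whose `v'ᵢ` lie on the same side of `x`, in left-to-right order,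
and keep only a suffix `x ^ aₖ v'ₖ` of the `k`-th one. If the `v'ᵢ` exceed `x`, take
`aₖ = k + 1`: for `i < j` the words `x ^ (j + 1) …` and `x ^ (i + 1) v'ᵢ …` first differ inside
the block where one has `x` and the other `v'ᵢ`, so the later piece is smaller. If the `v'ᵢ`
are below `x`, take `aₖ = n - k` instead. Extending each piece to the start of the next one
cuts `W` into `n` strictly decreasing factors.
-/

variable {α : Type*} [LinearOrder α]

section Words

variable {β : Type*}

theorem wpow_succ (x : List β) (k : ℕ) : wpow x (k + 1) = x ++ wpow x k := by
  simp only [wpow, List.replicate_succ, List.flatten_cons]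

theorem wpow_add (x : List β) (m k : ℕ) : wpow x (m + k) = wpow x m ++ wpow x k := by
  simp only [wpow, List.replicate_add, List.flatten_append]

theorem length_wpow (x : List β) (d : ℕ) : (wpow x d).length = d * x.length := by
  simp [wpow]

theorem wpow_eq_wpow_append_of_lt (x : List β) {i j : ℕ} (hij : i < j) :
    wpow x j = wpow x i ++ (x ++ wpow x (j - i - 1)) := by
  rw [← wpow_succ, ← wpow_add]
  congr 1
  omega

theorem List.Lex.append_of_length_eq {r : β → β → Prop} {a b : List β}
    (h : List.Lex r a b) (hlen : a.length = b.length) (A B : List β) :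
    List.Lex r (a ++ A) (b ++ B) := by
  induction h with
  | nil => simp at hlen
  | rel h => exact List.Lex.rel h
  | cons _ ih => exact List.Lex.cons (ih (by simpa using hlen))

theorem List.take_eq_take_append_flatten_ofFn (W : List β) (n : ℕ) (t : ℕ → ℕ)
    (ht : ∀ k < n, t k ≤ t (k + 1)) :
    W.take (t n) = W.take (t 0) ++
      (List.ofFn fun k : Fin n => (W.drop (t k)).take (t (k + 1) - t k)).flatten := by
  induction n with
  | zero => simp
  | succ n ih =>
    rw [List.ofFn_succ', List.concat_eq_append, List.flatten_append, ← List.append_assoc]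
    simp only [Fin.val_castSucc, Fin.val_last, List.flatten_singleton]
    rw [← ih fun k hk => ht k (by omega), ← List.take_add, Nat.add_sub_cancel' (ht n (by omega))]

theorem List.IsPrefix.drop_length_of_append {u v L : List β} (h : u ++ v <+: L) :
    v <+: L.drop u.length := by
  obtain ⟨r, rfl⟩ := h
  simp

theorem List.Lex.wpow_lt_wpow_append {r : β → β → Prop} {x v : List β} (hxv : List.Lex r x v)
    (hlen : x.length = v.length) {i j : ℕ} (hij : i < j) (A B : List β) :
    List.Lex r (wpow x j ++ A) (wpow x i ++ (v ++ B)) := by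
  rw [wpow_eq_wpow_append_of_lt x hij, List.append_assoc, List.append_assoc]
  exact List.Lex.append_left _ (hxv.append_of_length_eq hlen _ _) _

theorem List.Lex.wpow_append_lt_wpow {r : β → β → Prop} {x v : List β} (hvx : List.Lex r v x)
    (hlen : v.length = x.length) {i j : ℕ} (hij : i < j) (A B : List β) :
    List.Lex r (wpow x i ++ (v ++ A)) (wpow x j ++ B) := by
  rw [wpow_eq_wpow_append_of_lt x hij, List.append_assoc, List.append_assoc]
  exact List.Lex.append_left _ (hvx.append_of_length_eq hlen _ _) _

end Words

theorem NDivisible.of_occurrences {n : ℕ} {W : List α} (s : Fin n → ℕ) (u : Fin n → List α)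
    (hocc : ∀ i, u i <+: W.drop (s i)) (hdisj : ∀ i j, i < j → s i + (u i).length ≤ s j)
    (hne : ∀ i, u i ≠ [])
    (hlt : ∀ i j, i < j → ∀ A B, List.Lex (· < ·) (u j ++ A) (u i ++ B)) :
    NDivisible n W := by
  set t : ℕ → ℕ := fun k => if h : k < n then s ⟨k, h⟩ else W.length with ht
  have ht_lt (i : Fin n) : t i = s i := dif_pos i.isLt
  have hend (i : Fin n) : s i + (u i).length ≤ t (i + 1) := by
    by_cases h : (i : ℕ) + 1 < n
    · simpa [ht, h] using hdisj i ⟨i + 1, h⟩ (Fin.mk_lt_mk.mpr (Nat.lt_succ_self i))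
    · have hlen := (hocc i).length_le
      have hpos := List.length_pos_iff.mpr (hne i)
      simp only [List.length_drop] at hlen
      simp only [ht, h, dite_false]
      omega
  have hpiece (i : Fin n) : u i <+: (W.drop (t i)).take (t (i + 1) - t i) := by
    rw [ht_lt]
    refine List.prefix_take_iff.mpr ⟨hocc i, ?_⟩
    have := hend i
    omega
  choose r hr using hpiece
  refine ⟨W.take (t 0), fun i => u i ++ r i, fun i => by simp [hne i], ?_, ?_⟩
  · have hmono : ∀ k < n, t k ≤ t (k + 1) := fun k hk =>
      (ht_lt ⟨k, hk⟩).trans_le ((Nat.le_add_right _ _).trans (hend ⟨k, hk⟩))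
    have hjoin := List.take_eq_take_append_flatten_ofFn W n t hmono
    rw [show t n = W.length from dif_neg (lt_irrefl n), List.take_length] at hjoin
    simpa only [← hr] using hjoin
  · exact fun i j hij => hlt i j hij (r j) (r i)

theorem NDivisible.of_wpow_occurrences {n : ℕ} {W x : List α} (p : Fin n → ℕ)
    (v : Fin n → List α) (pos : Fin n → ℕ) (hocc : ∀ i, wpow x (p i) ++ v i <+: W.drop (pos i))
    (hdisj : ∀ i j, i < j → pos i + (wpow x (p i) ++ v i).length ≤ pos j)
    (a : Fin n → ℕ) (ha : ∀ i, a i ≤ p i) (hne : ∀ i, v i ≠ [])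
    (hlt : ∀ i j, i < j → ∀ A B,
      List.Lex (· < ·) (wpow x (a j) ++ (v j ++ A)) (wpow x (a i) ++ (v i ++ B))) :
    NDivisible n W := by
  have hsplit (i : Fin n) : wpow x (p i) = wpow x (p i - a i) ++ wpow x (a i) := by
    rw [← wpow_add, Nat.sub_add_cancel (ha i)]
  refine NDivisible.of_occurrences (fun i => pos i + (p i - a i) * x.length)
    (fun i => wpow x (a i) ++ v i) (fun i => ?_) (fun i j hij => ?_) (fun i => by simp [hne i])
    (fun i j hij A B => by simpa only [List.append_assoc] using hlt i j hij A B)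
  · have h := hocc i
    rw [hsplit, List.append_assoc] at h
    simpa only [List.drop_drop, length_wpow] using h.drop_length_of_append
  · have h := hdisj i j hij
    rw [hsplit] at h
    simp only [List.length_append, length_wpow] at h ⊢
    omega

theorem stmt13_general (n : ℕ) (W x : List α) (hx : x ≠ [])
    (p : Fin (2 * n - 1) → ℕ) (hp : ∀ i, n < p i)
    (v' : Fin (2 * n - 1) → List α) (hvlen : ∀ i, (v' i).length = x.length)
    (pos : Fin (2 * n - 1) → ℕ)
    (hocc : ∀ i, (W.drop (pos i)).take (wpow x (p i) ++ v' i).length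
      = wpow x (p i) ++ v' i)
    (hdisj : ∀ i j, i < j → pos i + (wpow x (p i) ++ v' i).length ≤ pos j)
    (hmaj : (∃ S : Finset (Fin (2 * n - 1)), n ≤ S.card ∧
              ∀ i ∈ S, List.Lex (· < ·) x (v' i)) ∨
            (∃ S : Finset (Fin (2 * n - 1)), n ≤ S.card ∧
              ∀ i ∈ S, List.Lex (· < ·) (v' i) x)) :
    NDivisible n W := by
  have hvne (i) : v' i ≠ [] := by
    rw [← List.length_pos_iff, hvlen]
    exact List.length_pos_iff.mpr hx
  have of_selection (e : Fin n ↪o Fin (2 * n - 1)) (a : Fin n → ℕ) (ha : ∀ i, a i ≤ n)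
      (hlt : ∀ i j, i < j → ∀ A B, List.Lex (· < ·)
        (wpow x (a j) ++ (v' (e j) ++ A)) (wpow x (a i) ++ (v' (e i) ++ B))) :
      NDivisible n W :=
    NDivisible.of_wpow_occurrences (fun i => p (e i)) (fun i => v' (e i)) (fun i => pos (e i))
      (fun i => List.prefix_iff_eq_take.mpr (hocc (e i)).symm)
      (fun i j hij => hdisj _ _ (e.strictMono hij)) a (fun i => (ha i).trans (hp _).le)
      (fun i => hvne _) hlt
  rcases hmaj with ⟨S, hS, hgt⟩ | ⟨S, hS, hlt⟩
  · refine of_selection (S.orderEmbOfCardLe hS) (fun i => i + 1) (fun i => i.isLt)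
      fun i j hij A B => ?_
    exact (hgt _ (S.orderEmbOfCardLe_mem hS i)).wpow_lt_wpow_append (hvlen _).symm
      (by simpa using hij) _ _
  · refine of_selection (S.orderEmbOfCardLe hS) (fun i => n - i) (fun i => Nat.sub_le _ _)
      fun i j hij A B => ?_
    exact (hlt _ (S.orderEmbOfCardLe_mem hS j)).wpow_append_lt_wpow (hvlen _)
      (by have := j.isLt; simp only [Fin.lt_def] at hij; omega) _ _

/-- If `W` contains `2n - 1` pairwise disjoint subwords `x ^ pᵢ ++ v'ᵢ`, with
`pᵢ > n`, `x` a fixed nonempty word and each `v'ᵢ` of the same length as `x` and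
comparable with `x`, and if among the `v'ᵢ` at least `n` are lexicographically
greater than `x` (or at least `n` are lexicographically smaller than `x`), then
`W` is `n`-divisible. -/
theorem stmt13 (n : ℕ) (hn : 1 ≤ n) (W x : List α) (hx : x ≠ [])
    (p : Fin (2 * n - 1) → ℕ) (hp : ∀ i, n < p i)
    (v' : Fin (2 * n - 1) → List α) (hvlen : ∀ i, (v' i).length = x.length)
    (hcomp : ∀ i, WComparable x (v' i))
    (pos : Fin (2 * n - 1) → ℕ)
    (hin : ∀ i, pos i + (wpow x (p i) ++ v' i).length ≤ W.length)
    (hocc : ∀ i, (W.drop (pos i)).take (wpow x (p i) ++ v' i).length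
      = wpow x (p i) ++ v' i)
    (hdisj : ∀ i j, i < j → pos i + (wpow x (p i) ++ v' i).length ≤ pos j)
    (hmaj : (∃ S : Finset (Fin (2 * n - 1)), n ≤ S.card ∧
              ∀ i ∈ S, List.Lex (· < ·) x (v' i)) ∨
            (∃ S : Finset (Fin (2 * n - 1)), n ≤ S.card ∧
              ∀ i ∈ S, List.Lex (· < ·) (v' i) x)) :
    NDivisible n W :=
  stmt13_general n W x hx p hp v' hvlen pos hocc hdisj hmaj
end

section
/- If a nonempty word x of length at least n is non-cyclic (not a proper power), then the word x^{2n} is n-divisible: the n cyclic shifts of x starting at positions 1,…,n within x² are pairwise comparable, and suitable disjoint occurrences of them inside x^{2n} go in strictly decreasing lexicographic order. -/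
variable {α : Type*} [LinearOrder α]

/-!
A primitive word is fixed by no nontrivial rotation: if `x.rotate m = x` then `take m x` and
`drop m x` commute, so both are powers of one word and `x` is a proper power. Hence the `n`
rotations of `x` at positions `0, …, n-1` are distinct words of the same length, so no one is a
prefix of another, and ordering them decreasingly gives a strictly lex-decreasing sequence in
which comparisons are decided before either word ends. Inside `x ^ (2n)` the `k`-th rotation
in this order occurs starting in the `k`-th block `x ++ x`, and cutting `x ^ (2n)` at these
occurrences gives the `n`-division.
-/

namespace List

variable {β : Type*}

lemma wpow_succ (u : List β) (d : ℕ) : wpow u (d + 1) = u ++ wpow u d := by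
  simp [wpow, replicate_succ]

lemma wpow_add (u : List β) (m k : ℕ) : wpow u (m + k) = wpow u m ++ wpow u k := by
  rw [wpow, replicate_add, flatten_append]; rfl

@[simp]
lemma length_wpow (u : List β) (d : ℕ) : (wpow u d).length = d * u.length := by
  simp [wpow, length_flatten, sum_replicate]

lemma exists_wpow_of_append_comm {a b : List β} (h : a ++ b = b ++ a) :
    ∃ (c : List β) (m k : ℕ), a = wpow c m ∧ b = wpow c k := by
  induction hN : a.length + b.length using Nat.strong_induction_on generalizing a b with
  | _ N ih =>
  rcases eq_or_ne a [] with rfl | ha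
  · exact ⟨b, 0, 1, rfl, by simp [wpow]⟩
  rcases eq_or_ne b [] with rfl | hb
  · exact ⟨a, 1, 0, by simp [wpow], rfl⟩
  rcases append_eq_append_iff.mp h with ⟨b', hb₁, hb₂⟩ | ⟨a', ha₁, ha₂⟩
  · have hlt : a.length + b'.length < N := by
      have := length_pos_iff.mpr ha
      rw [← hN, hb₁, length_append]; omega
    obtain ⟨c, m, k, rfl, rfl⟩ := ih _ hlt (hb₁.symm.trans hb₂) rfl
    exact ⟨c, m, m + k, rfl, by rw [hb₁, wpow_add]⟩
  · have hlt : b.length + a'.length < N := by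
      have := length_pos_iff.mpr hb
      rw [← hN, ha₁, length_append]; omega
    obtain ⟨c, m, k, rfl, rfl⟩ := ih _ hlt (ha₁.symm.trans ha₂) rfl
    exact ⟨c, m + k, m, by rw [ha₁, wpow_add], rfl⟩

def IsProperPower (x : List β) : Prop := ∃ (v : List β) (k : ℕ), 1 < k ∧ x = wpow v k

lemma isProperPower_of_rotate_eq_self {x : List β} {m : ℕ} (hm : 0 < m) (hmx : m < x.length)
    (h : x.rotate m = x) : IsProperPower x := by
  have hx : x.take m ++ x.drop m = x := take_append_drop m x
  have hcomm : x.take m ++ x.drop m = x.drop m ++ x.take m := by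
    rw [← rotate_eq_drop_append_take hmx.le, h, hx]
  obtain ⟨c, p, q, hp, hq⟩ := exists_wpow_of_append_comm hcomm
  have hp0 : p ≠ 0 := by
    rintro rfl
    have := congrArg length hp
    simp only [length_take, length_wpow, zero_mul] at this
    omega
  have hq0 : q ≠ 0 := by
    rintro rfl
    have := congrArg length hq
    simp only [length_drop, length_wpow, zero_mul] at this
    omega
  exact ⟨c, p + q, by omega, by rw [← hx, hp, hq, wpow_add]⟩

lemma rotate_injOn_of_not_isProperPower {x : List β} (hx : ¬ IsProperPower x) {i j : ℕ}
    (hi : i < x.length) (hj : j < x.length) (h : x.rotate i = x.rotate j) : i = j := by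
  wlog hij : i < j generalizing i j
  · rcases (not_lt.mp hij).lt_or_eq with hji | hji
    · exact (this hj hi h.symm hji).symm
    · exact hji.symm
  refine absurd (isProperPower_of_rotate_eq_self (m := j - i) (by omega) (by omega) ?_) hx
  calc x.rotate (j - i) = x.rotate ((j - i) + x.length) := by
        rw [← rotate_mod x (_ + _), Nat.add_mod_right, rotate_mod]
    _ = (x.rotate j).rotate (x.length - i) := by rw [rotate_rotate]; congr 1; omega
    _ = (x.rotate i).rotate (x.length - i) := by rw [h]
    _ = x := by rw [rotate_rotate, Nat.add_sub_cancel' hi.le, rotate_length]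

lemma Lex.append_of_not_prefix {r : β → β → Prop} {s t : List β} (h : Lex r s t)
    (hst : ¬ s <+: t) (u v : List β) : Lex r (s ++ u) (t ++ v) := by
  induction h with
  | nil => exact absurd nil_prefix hst
  | cons h ih => exact .cons (ih fun hp => hst (cons_prefix_cons.mpr ⟨rfl, hp⟩))
  | rel hab => exact .rel hab

lemma flatten_ofFn_extract (W : List β) {n : ℕ} {p : ℕ → ℕ} (hp : Monotone p) :
    (ofFn fun k : Fin n => W.extract (p k) (p (k + 1))).flatten = W.extract (p 0) (p n) := by
  induction n generalizing p with
  | zero => simp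
  | succ n ih =>
    rw [ofFn_succ, flatten_cons]
    simp only [Fin.val_succ, Fin.val_zero]
    rw [ih (p := fun k => p (k + 1)) (fun a b h => hp (by omega))]
    simp only [extract_eq_take_drop]
    have h01 := hp (Nat.zero_le 1)
    have h1n := hp (show 1 ≤ n + 1 by omega)
    rw [show p (n + 1) - p 0 = (p 1 - p 0) + (p (n + 1) - p 1) by omega, take_add, drop_drop,
      Nat.add_sub_cancel' h01]

lemma rotate_prefix_drop_wpow {x : List β} {i k m : ℕ} (hi : i ≤ x.length) (hm : k + 2 ≤ m) :
    x.rotate i <+: (wpow x m).drop (k * x.length + i) := by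
  obtain ⟨r, rfl⟩ := Nat.exists_eq_add_of_le hm
  have hsplit : wpow x (k + 2 + r) = wpow x k ++ (x ++ (x ++ wpow x r)) := by
    rw [add_assoc, wpow_add, add_comm 2 r, wpow_succ, wpow_succ]
  rw [hsplit, ← drop_drop, drop_left' (length_wpow x k), drop_append_of_le_length hi,
    rotate_eq_drop_append_take hi, prefix_append_right_inj]
  exact (take_prefix i x).trans (prefix_append _ _)

lemma exists_wpow_eq_append_flatten_rotate_prefix (x : List β) {n : ℕ} (i : Fin n → ℕ)
    (hi : ∀ k, i k ≤ x.length) :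
    ∃ (v : List β) (u : Fin n → List β),
      wpow x (2 * n) = v ++ (ofFn u).flatten ∧ ∀ k, x.rotate (i k) <+: u k := by
  set L := x.length
  set W := wpow x (2 * n)
  -- the `k`-th factor starts at offset `i k` inside the `k`-th copy of `x ++ x`
  let j : ℕ → ℕ := fun k => if h : k < n then i ⟨k, h⟩ else 0
  let p : ℕ → ℕ := fun k => 2 * k * L + j k
  have hj : ∀ k, j k ≤ L := fun k => by
    unfold j; split_ifs
    exacts [hi _, Nat.zero_le _]
  have hstep : ∀ k, p k + L ≤ p (k + 1) := fun k => by
    have := hj k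
    have : 2 * (k + 1) * L = 2 * k * L + 2 * L := by ring
    simp only [p]
    omega
  have hp : Monotone p := monotone_nat_of_le_succ fun k => le_self_add.trans (hstep k)
  refine ⟨W.take (p 0), fun k => W.extract (p k) (p (k + 1)), ?_, fun k => ?_⟩
  · have hpn : p n = W.length := by simp [p, j, W, L]
    rw [flatten_ofFn_extract _ hp, hpn, extract_eq_take_drop, ← length_drop,
      take_length, take_append_drop]
  · have hpk : p k = 2 * k * L + i k := by simp [p, j]
    dsimp only
    rw [extract_eq_take_drop, prefix_take_iff, length_rotate]
    exact ⟨hpk ▸ rotate_prefix_drop_wpow (hi k) (by omega), by have := hstep k; omega⟩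

end List

lemma Fin.exists_perm_strictAnti {γ : Type*} [LinearOrder γ] {n : ℕ} {f : Fin n → γ}
    (hf : Function.Injective f) : ∃ σ : Equiv.Perm (Fin n), StrictAnti (f ∘ σ) :=
  ⟨Tuple.sort (OrderDual.toDual ∘ f),
    (Tuple.monotone_sort (OrderDual.toDual ∘ f)).dual_right.strictAnti_of_injective
      (hf.comp (Equiv.injective _))⟩

lemma wComparable_of_length_eq {β : Type*} {u v : List β} (hlen : u.length = v.length)
    (hne : u ≠ v) : WComparable u v :=
  ⟨fun h => hne (h.eq_of_length hlen), fun h => hne (h.eq_of_length hlen.symm).symm⟩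

lemma nDivisible_of_prefix {n : ℕ} {W v : List α} {u w : Fin n → List α}
    (hW : W = v ++ (List.ofFn u).flatten) (hwu : ∀ k, w k <+: u k) (hne : ∀ k, w k ≠ [])
    (hw : StrictAnti w) (hcomp : ∀ k l, k < l → WComparable (w k) (w l)) : NDivisible n W := by
  refine ⟨v, u, fun k hu => hne k (List.prefix_nil.mp (hu ▸ hwu k)), hW, fun k l hkl => ?_⟩
  obtain ⟨_, hk⟩ := hwu k
  obtain ⟨_, hl⟩ := hwu l
  rw [← hk, ← hl]
  exact List.Lex.append_of_not_prefix (hw hkl) (hcomp k l hkl).2 _ _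

theorem stmt14_general (n : ℕ) (x : List α) (hx : x ≠ [])
    (hlen : n ≤ x.length)
    (hprim : ¬ ∃ (v : List α) (k : ℕ), 1 < k ∧ x = wpow v k) :
    (∀ i j : ℕ, i < n → j < n → i ≠ j → WComparable (x.rotate i) (x.rotate j)) ∧
    NDivisible n (wpow x (2 * n)) := by
  have hinj : ∀ i j : ℕ, i < n → j < n → x.rotate i = x.rotate j → i = j := fun i j hi hj =>
    List.rotate_injOn_of_not_isProperPower hprim (by omega) (by omega)
  have hcomp : ∀ i j : ℕ, i < n → j < n → i ≠ j → WComparable (x.rotate i) (x.rotate j) :=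
    fun i j hi hj hij => wComparable_of_length_eq (by simp) fun h => hij (hinj i j hi hj h)
  refine ⟨hcomp, ?_⟩
  obtain ⟨σ, hσ⟩ := Fin.exists_perm_strictAnti (f := fun k : Fin n => x.rotate k)
    fun k l h => Fin.ext (hinj k l k.2 l.2 h)
  obtain ⟨v, u, hW, hwu⟩ :=
    List.exists_wpow_eq_append_flatten_rotate_prefix x (fun k => σ k) fun k => by omega
  exact nDivisible_of_prefix hW hwu (fun k => by simpa using hx) hσ fun k l hkl =>
    hcomp _ _ (σ k).2 (σ l).2 (Fin.val_injective.ne (σ.injective.ne hkl.ne))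

/-- If `x` is a nonempty primitive (non-cyclic) word of length at least `n`,
then its `n` cyclic shifts starting at the first `n` positions are pairwise
comparable, and `x ^ (2n)` is `n`-divisible. -/
theorem stmt14 (n : ℕ) (hn : 1 ≤ n) (x : List α) (hx : x ≠ [])
    (hlen : n ≤ x.length)
    (hprim : ¬ ∃ (v : List α) (k : ℕ), 1 < k ∧ x = wpow v k) :
    (∀ i j : ℕ, i < n → j < n → i ≠ j → WComparable (x.rotate i) (x.rotate j)) ∧
    NDivisible n (wpow x (2 * n)) :=
  stmt14_general n x hx hlen hprim
end
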